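/- arXiv:2307.01868 — 9 statements merged into one kernel-verified Lean document; each statement's English description precedes it below -/
import Mathlib

section
/- The generalized quasiorder closure of an m-ary relation ρ (the least generalized quasiorder containing ρ) equals the transitive closure of its reflexive closure: ρ^gqu = (ρ^ref)^tra. -/
def GRefl {A : Type*} {m : ℕ} (ρ : Set (Fin m → A)) : Prop :=
  ∀ a : A, (fun _ => a) ∈ ρ

def GTrans {A : Type*} {m : ℕ} (ρ : Set (Fin m → A)) : Prop :=
  ∀ M : Fin m → Fin m → A,
    (∀ i, (fun j => M i j) ∈ ρ) → (∀ j, (fun i => M i j) ∈ ρ) →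
    (fun i => M i i) ∈ ρ

def GQuord {A : Type*} {m : ℕ} (ρ : Set (Fin m → A)) : Prop :=
  GRefl ρ ∧ GTrans ρ

/-- ∂(ρ): the set of diagonals of m×m matrices all of whose rows and columns
lie in ρ. -/
def gdiag {A : Type*} {m : ℕ} (ρ : Set (Fin m → A)) : Set (Fin m → A) :=
  {d | ∃ M : Fin m → Fin m → A,
    (∀ i, (fun j => M i j) ∈ ρ) ∧ (∀ j, (fun i => M i j) ∈ ρ) ∧ d = fun i => M i i}


/-- The (generalized) transitive closure: the least generalized transitive
relation containing ρ. -/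
def traClosure {A : Type*} {m : ℕ} (ρ : Set (Fin m → A)) : Set (Fin m → A) :=
  ⋂₀ {σ : Set (Fin m → A) | GTrans σ ∧ ρ ⊆ σ}

/-- The reflexive closure: ρ together with all constant tuples. -/
def reflClosure {A : Type*} {m : ℕ} (ρ : Set (Fin m → A)) : Set (Fin m → A) :=
  ρ ∪ {t | ∃ a : A, t = fun _ => a}

/-- The generalized quasiorder closure: the least generalized quasiorder
containing ρ. -/
def gquClosure {A : Type*} {m : ℕ} (ρ : Set (Fin m → A)) : Set (Fin m → A) :=
  ⋂₀ {σ : Set (Fin m → A) | GQuord σ ∧ ρ ⊆ σ}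

/-- ρ^gqu = (ρ^ref)^tra. -/
theorem stmt_6 {A : Type*} {m : ℕ} (ρ : Set (Fin m → A)) :
    gquClosure ρ = traClosure (reflClosure ρ) := by
  apply Set.Subset.antisymm
  · -- gquClosure ρ ⊆ traClosure (reflClosure ρ)
    intro t ht
    apply ht
    constructor
    · constructor
      · -- GRefl of traClosure (reflClosure ρ)
        intro a σ hσ
        exact hσ.2 (Or.inr ⟨a, rfl⟩)
      · -- GTrans of traClosure (reflClosure ρ)
        intro M hr hc σ hσ
        exact hσ.1 M (fun i => hr i σ hσ) (fun j => hc j σ hσ)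
    · intro x hx σ hσ
      exact hσ.2 (Or.inl hx)
  · -- traClosure (reflClosure ρ) ⊆ gquClosure ρ
    intro t ht
    apply ht
    constructor
    · -- GTrans of gquClosure ρ
      intro M hr hc σ hσ
      exact hσ.1.2 M (fun i => hr i σ hσ) (fun j => hc j σ hσ)
    · -- reflClosure ρ ⊆ gquClosure ρ
      intro x hx σ hσ
      rcases hx with hx | ⟨a, rfl⟩
      · exact hσ.2 hx
      · exact hσ.1.1 a
end

section
/- Let ρ be an m-ary generalized quasiorder on A. Then for every n-dimensional m×...×m array (a_{i_1,...,i_n}) over A, if every line of the array (i.e., for each coordinate j and each fixed choice of the other indices, the m-tuple obtained by varying the j-th index from 1 to m) belongs to ρ, then the main diagonal (a_{1,...,1},...,a_{m,...,m}) belongs to ρ. -/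
/-- For a generalized quasiorder ρ and an n-dimensional m×...×m array all of
whose lines belong to ρ, the main diagonal belongs to ρ. -/
theorem stmt_7 {A : Type*} {m n : ℕ} (ρ : Set (Fin m → A)) (hρ : GQuord ρ)
    (a : (Fin n → Fin m) → A)
    (hl : ∀ (j : Fin n) (idx : Fin n → Fin m),
        (fun t : Fin m => a (Function.update idx j t)) ∈ ρ) :
    (fun i : Fin m => a (fun _ => i)) ∈ ρ := by
  induction n with
  | zero =>
    have h := hρ.1 (a (fun i => i.elim0))
    have : (fun i : Fin m => a (fun _ => i)) = (fun _ : Fin m => a (fun i => i.elim0)) := by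
      funext i; congr 1; funext j; exact j.elim0
    rw [this]; exact h
  | succ n ih =>
    have key : (fun i : Fin m => a (Fin.snoc (fun _ => i) i)) ∈ ρ := by
      apply hρ.2 (fun i j => a (Fin.snoc (fun _ => i) j))
      · intro i
        have h := hl (Fin.last n) (Fin.snoc (fun _ => i) i)
        have e : (fun t : Fin m => a (Function.update (Fin.snoc (fun _ => i) i) (Fin.last n) t))
            = fun t => a (Fin.snoc (fun _ => i) t) := by
          funext t; congr 1; funext k
          rcases eq_or_ne k (Fin.last n) with rfl | hk
          · simp
          · rw [Function.update_of_ne hk]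
            rcases Fin.exists_castSucc_eq.mpr hk with ⟨k', rfl⟩
            simp
        rw [e] at h; exact h
      · intro j
        exact ih (fun idx => a (Fin.snoc idx j)) (fun j' idx => by
          have h := hl j'.castSucc (Fin.snoc idx j)
          have e : (fun t : Fin m => a (Function.update (Fin.snoc idx j) j'.castSucc t))
              = fun t => a (Fin.snoc (Function.update idx j' t) j) := by
            funext t; congr 1; funext k
            rcases eq_or_ne k (Fin.last n) with rfl | hk
            · rw [Function.update_of_ne (by simp [Fin.ext_iff]; omega)]; simp
            · rcases Fin.exists_castSucc_eq.mpr hk with ⟨k', rfl⟩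
              rcases eq_or_ne k' j' with rfl | hk'
              · simp
              · rw [Function.update_of_ne (by simpa [Fin.ext_iff] using Fin.val_ne_of_ne hk')]
                simp [Function.update_of_ne hk']
          rw [e] at h; exact h)
    have e : (fun i : Fin m => a (fun _ => i)) = fun i => a (Fin.snoc (fun _ => i) i) := by
      funext i; congr 1; funext k
      rcases eq_or_ne k (Fin.last n) with rfl | hk
      · simp
      · rcases Fin.exists_castSucc_eq.mpr hk with ⟨k', rfl⟩; simp
    rw [e]; exact key
end

section
/- Let ρ be an m-ary generalized quasiorder on A and f : A^n → A an n-ary operation. Then f preserves ρ if and only if every translation of f (the unary functions obtained from f by fixing all arguments but one to constants) preserves ρ. -/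
/-- An n-ary operation f preserves an m-ary relation ρ. -/
def Preserves {A : Type*} {n m : ℕ} (f : (Fin n → A) → A) (ρ : Set (Fin m → A)) : Prop :=
  ∀ r : Fin n → (Fin m → A), (∀ j, r j ∈ ρ) → (fun i => f fun j => r j i) ∈ ρ

/-- A unary function g preserves an m-ary relation ρ (is an endomorphism). -/
def UPres {A : Type*} {m : ℕ} (g : A → A) (ρ : Set (Fin m → A)) : Prop :=
  ∀ r ∈ ρ, (fun i => g (r i)) ∈ ρ

/-- An operation preserves a generalized quasiorder iff all its translations do. -/
theorem stmt_8 {A : Type*} {n m : ℕ} (ρ : Set (Fin m → A)) (hρ : GQuord ρ)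
    (f : (Fin n → A) → A) :
    Preserves f ρ ↔
      ∀ (i : Fin n) (a : Fin n → A),
        UPres (fun x => f (Function.update a i x)) ρ := by
  obtain ⟨hrefl, htrans⟩ := hρ
  constructor
  · intro hf i a r hr
    have h := hf (fun j => if j = i then r else fun _ => a j) ?_
    · have heq : (fun x => f (Function.update a i (r x)))
          = (fun x => f fun j => (if j = i then r else fun _ => a j) x) := by
        funext x
        congr 1
        funext j
        by_cases hj : j = i <;> simp [Function.update, hj]
      rw [heq]
      exact h
    · intro j
      by_cases hj : j = i
      · simpa [hj] using hr
      · simpa [hj] using hrefl (a j)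
  · intro hu r hr
    have key : ∀ k : ℕ, ∀ c : Fin n → A,
        (fun i => f (fun j => if (j : ℕ) < k then r j i else c j)) ∈ ρ := by
      intro k
      induction k with
      | zero => intro c; simpa using hrefl (f c)
      | succ k ih =>
        intro c
        by_cases hk : k < n
        · have hd := htrans (fun i i' => f (fun j =>
            if (j : ℕ) < k then r j i else if (j : ℕ) = k then r ⟨k, hk⟩ i' else c j)) ?_ ?_
          · have heq : (fun i => f (fun j => if (j : ℕ) < k + 1 then r j i else c j))
                = (fun i => f (fun j =>
                    if (j : ℕ) < k then r j i else if (j : ℕ) = k then r ⟨k, hk⟩ i else c j)) := by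
              funext i
              congr 1
              funext j
              by_cases h1 : (j : ℕ) < k
              · simp [h1, Nat.lt_succ_of_lt h1]
              · by_cases h2 : (j : ℕ) = k
                · have hj : j = ⟨k, hk⟩ := Fin.ext h2
                  subst hj
                  simp [h1, h2, Nat.lt_succ_iff]
                · have h3 : ¬ (j : ℕ) < k + 1 := by omega
                  simp [h1, h2, h3]
            rw [heq]
            exact hd
          · intro i
            have h := hu ⟨k, hk⟩ (fun j => if (j : ℕ) < k then r j i else c j)
              (r ⟨k, hk⟩) (hr _)
            have heq : (fun i' => f fun j =>
                  if (j : ℕ) < k then r j i else if (j : ℕ) = k then r ⟨k, hk⟩ i' else c j)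
                = (fun i' => f (Function.update
                    (fun j => if (j : ℕ) < k then r j i else c j) ⟨k, hk⟩ (r ⟨k, hk⟩ i'))) := by
              funext i'
              congr 1
              funext j
              by_cases hj : j = (⟨k, hk⟩ : Fin n)
              · subst hj
                simp [Function.update]
              · have h2 : (j : ℕ) ≠ k := fun hc => hj (Fin.ext hc)
                simp [Function.update, hj, h2]
            rw [heq]
            exact h
          · intro i'
            exact ih (fun j => if (j : ℕ) = k then r ⟨k, hk⟩ i' else c j)
        · have h := ih c
          have heq : (fun i => f (fun j => if (j : ℕ) < k + 1 then r j i else c j))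
              = (fun i => f (fun j => if (j : ℕ) < k then r j i else c j)) := by
            funext i
            congr 1
            funext j
            have hj := j.isLt
            have : ((j : ℕ) < k + 1) ↔ ((j : ℕ) < k) := by omega
            rw [if_congr this rfl rfl]
          rw [heq]
          exact h
    by_cases hm : Nonempty (Fin m)
    · obtain ⟨i0⟩ := hm
      have h := key n (fun j => r j i0)
      have heq : (fun i => f fun j => r j i)
          = (fun i => f (fun j => if (j : ℕ) < n then r j i else r j i0)) := by
        funext i
        congr 1
        funext j
        simp [j.isLt]
      rw [heq]
      exact h
    · have hempty : IsEmpty (Fin m) := not_nonempty_iff.mp hm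
      have h0 := htrans (fun i _ => (hempty.elim i : A)) (fun i => hempty.elim i)
        (fun i => hempty.elim i)
      have heq : (fun i => f fun j => r j i) = (fun i : Fin m => (hempty.elim i : A)) := by
        funext i
        exact hempty.elim i
      rw [heq]
      exact h0
end

section
/- For any set Q of generalized quasiorders on A, the polymorphism clone of Q equals (End Q)^*, i.e., an operation f belongs to Pol Q if and only if every translation of f is an endomorphism of every relation in Q. -/
/-- For a set Q of generalized quasiorders, Pol Q = (End Q)*: an operation
preserves every relation of Q iff all its translations do. -/
theorem stmt_9 {A : Type*} [Fintype A]
    (Q : Set ((m : ℕ) × Set (Fin m → A)))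
    (hQ : ∀ q ∈ Q, GQuord q.2) {n : ℕ} (f : (Fin n → A) → A) :
    (∀ q ∈ Q, Preserves f q.2) ↔
      ∀ (i : Fin n) (a : Fin n → A), ∀ q ∈ Q,
        UPres (fun x => f (Function.update a i x)) q.2 := by
  constructor
  · intro h i a q hq r hr
    have key : (fun k => f fun j => (if j = i then r else fun _ => a j) k) ∈ q.2 :=
      h q hq (fun j => if j = i then r else fun _ => a j) (by
        intro j
        by_cases hj : j = i
        · simpa [hj] using hr
        · simpa [hj] using (hQ q hq).1 (a j))
    have heq : (fun k => f fun j => (if j = i then r else fun _ => a j) k)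
        = (fun k => f (Function.update a i (r k))) := by
      funext k
      congr 1
      funext j
      rw [Function.update_apply, apply_ite (fun g : Fin q.1 → A => g k)]
    exact heq ▸ key
  · intro h q hq s hs
    have claim : ∀ t : ℕ, t ≤ n → ∀ c : Fin n → A,
        (fun i => f (fun j => if (j : ℕ) < t then s j i else c j)) ∈ q.2 := by
      intro t
      induction t with
      | zero =>
        intro _ c
        simpa using (hQ q hq).1 (f (fun j => c j))
      | succ t ih =>
        intro ht c
        set T : Fin n := ⟨t, by omega⟩ with hT
        have key : (fun i =>
            (fun i i' => f fun j => if (j : ℕ) < t then s j i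
              else if j = T then s T i' else c j) i i) ∈ q.2 := by
          refine (hQ q hq).2 (fun i i' => f fun j => if (j : ℕ) < t then s j i
              else if j = T then s T i' else c j) ?_ ?_
          · intro i
            have key2 : (fun i' => f (Function.update
                (fun j => if (j : ℕ) < t then s j i else c j) T (s T i'))) ∈ q.2 :=
              h T (fun j => if (j : ℕ) < t then s j i else c j) q hq (s T) (hs T)
            have heq : (fun i' => f (Function.update
                  (fun j => if (j : ℕ) < t then s j i else c j) T (s T i')))
                = (fun i' => f fun j => if (j : ℕ) < t then s j i
                    else if j = T then s T i' else c j) := by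
              funext i'
              congr 1
              funext j
              rw [Function.update_apply]
              by_cases h2 : j = T
              · subst h2
                simp [hT]
              · simp [h2]
            exact heq ▸ key2
          · intro i'
            have key2 := ih (by omega) (fun j => if j = T then s T i' else c j)
            have heq : (fun i => f fun j => if (j : ℕ) < t then s j i
                  else (if j = T then s T i' else c j))
                = (fun i => f fun j => if (j : ℕ) < t then s j i
                    else if j = T then s T i' else c j) := by
              funext i
              congr 1
            exact heq ▸ key2
        have heq : (fun i =>
              (fun i i' => f fun j => if (j : ℕ) < t then s j i
                else if j = T then s T i' else c j) i i)
            = (fun i => f fun j => if (j : ℕ) < t + 1 then s j i else c j) := by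
          funext i
          show (f fun j => if (j : ℕ) < t then s j i else if j = T then s T i else c j) = _
          congr 1
          funext j
          by_cases h1 : (j : ℕ) < t
          · simp [h1, Nat.lt_succ_of_lt h1]
          · by_cases h2 : j = T
            · subst h2
              simp [hT]
            · have h3 : ¬ (j : ℕ) < t + 1 := by
                have : (j : ℕ) ≠ t := fun hc => h2 (Fin.ext (by simpa [hT] using hc))
                omega
              simp [h1, h2, h3]
        exact heq ▸ key
    by_cases hne : Nonempty (Fin n → A)
    · obtain ⟨c⟩ := hne
      have key := claim n le_rfl c
      have heq : (fun i => f fun j => if (j : ℕ) < n then s j i else c j)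
          = (fun i => f fun j => s j i) := by
        funext i
        congr 1
        funext j
        simp [j.isLt]
      exact heq ▸ key
    · have hn : 0 < n := Nat.pos_of_ne_zero
        (fun h0 => hne ⟨fun j => (Fin.cast h0 j).elim0⟩)
      have hA : IsEmpty A := by
        by_contra hA'
        exact hne ⟨fun _ => Classical.choice (not_isEmpty_iff.mp hA')⟩
      rcases Nat.eq_zero_or_pos q.1 with hm | hm
      · have key := (hQ q hq).2 (fun i _ => (Fin.cast hm i).elim0)
          (fun i => (Fin.cast hm i).elim0) (fun i => (Fin.cast hm i).elim0)
        have heq : (fun i => (fun (i' : Fin q.1) (_ : Fin q.1) =>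
              (Fin.cast hm i').elim0 (α := A)) i i) = (fun i => f fun j => s j i) :=
          funext fun i => (Fin.cast hm i).elim0
        exact heq ▸ key
      · exact (hA.false (s ⟨0, hn⟩ ⟨0, hm⟩)).elim
end

section
/- For a monoid M of unary operations on a finite set A (containing the identity, closed under composition), the set M^* of all operations whose translations all lie in M is a preclone: it contains the identity and is closed under cyclic shift ζ, transposition τ of the first two arguments, and linearized composition (f∘g)(x_1,...,x_{m+n−1}) = f(g(x_1,...,x_m), x_{m+1},...,x_{m+n−1}). -/
/-- f ∈ M*: all translations of f (unary functions obtained by fixing all but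
one argument to constants) belong to M. -/
def MStar {A : Type*} (M : Set (A → A)) {n : ℕ} (f : (Fin n → A) → A) : Prop :=
  ∀ (i : Fin n) (a : Fin n → A), (fun x => f (Function.update a i x)) ∈ M

/-- For a transformation monoid M on a finite set A, M* is a preclone: it
contains the identity operation and is closed under cyclic shift ζ,
transposition τ of the first two arguments, and linearized composition. -/
theorem stmt_10 {A : Type*} [Fintype A] [Nonempty A] (M : Set (A → A))
    (hid : id ∈ M) (hcomp : ∀ g ∈ M, ∀ h ∈ M, g ∘ h ∈ M) :
    MStar M (fun v : Fin 1 → A => v 0) ∧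
    (∀ (n : ℕ) (f : (Fin (n + 1) → A) → A), MStar M f →
      MStar M (fun v : Fin (n + 1) → A => f (fun i => v (i + 1)))) ∧
    (∀ (n : ℕ) (f : (Fin (n + 1) → A) → A), MStar M f →
      MStar M (fun v : Fin (n + 1) → A => f (v ∘ Equiv.swap 0 1))) ∧
    (∀ (n m : ℕ) (f : (Fin (n + 1) → A) → A) (g : (Fin (m + 1) → A) → A),
      MStar M f → MStar M g →
      MStar M (fun v : Fin (m + 1 + n) → A =>
        f (Fin.cons (g fun j => v (Fin.castAdd n j))
            (fun i => v (Fin.natAdd (m + 1) i))))) := by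
  refine ⟨?_, ?_, ?_, ?_⟩
  · intro i a
    have h : (fun x => Function.update a i x 0) = id := by
      funext x
      have hi : i = 0 := Subsingleton.elim _ _
      rw [hi]; simp
    simpa [h] using hid
  · intro n f hf i a
    have key : ∀ x, (fun j : Fin (n+1) => Function.update a i x (j + 1))
        = Function.update (fun j : Fin (n+1) => a (j + 1)) (i - 1) x := by
      intro x; funext j
      simp only [Function.update_apply]
      exact if_congr eq_sub_iff_add_eq.symm rfl rfl
    simpa only [key] using hf (i - 1) (fun j => a (j + 1))
  · intro n f hf i a
    have key : ∀ x, (Function.update a i x) ∘ (Equiv.swap 0 1)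
        = Function.update (a ∘ Equiv.swap 0 1) (Equiv.swap 0 1 i) x := by
      intro x; funext j
      simp only [Function.comp_apply, Function.update_apply]
      exact if_congr (Equiv.swap_apply_eq_iff) rfl rfl
    simpa only [key] using hf (Equiv.swap 0 1 i) (a ∘ Equiv.swap 0 1)
  · intro n m f g hf hg i a
    induction i using Fin.addCases with
    | left j =>
      have h1 : ∀ (x : A) k, Function.update a (Fin.castAdd n j) x (Fin.natAdd (m+1) k)
          = a (Fin.natAdd (m+1) k) := by
        intro x k
        apply Function.update_of_ne
        simp only [ne_eq, Fin.ext_iff, Fin.coe_castAdd, Fin.coe_natAdd]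
        omega
      have h2 : ∀ x : A, (fun j' => Function.update a (Fin.castAdd n j) x (Fin.castAdd n j'))
          = Function.update (fun j' : Fin (m+1) => a (Fin.castAdd n j')) j x := by
        intro x; funext j'
        simp only [Function.update_apply]
        refine if_congr ?_ rfl rfl
        simp [Fin.ext_iff]
      have hmem := hcomp
        (fun y => f (Function.update
          (Fin.cons (a (Fin.castAdd n j)) (fun k => a (Fin.natAdd (m+1) k))) 0 y))
        (hf 0 _)
        (fun x => g (Function.update (fun j' : Fin (m+1) => a (Fin.castAdd n j')) j x))
        (hg j _)
      have heq : (fun x => f (Fin.cons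
            (g fun j' => Function.update a (Fin.castAdd n j) x (Fin.castAdd n j'))
            (fun k => Function.update a (Fin.castAdd n j) x (Fin.natAdd (m+1) k))))
          = (fun y => f (Function.update
              (Fin.cons (a (Fin.castAdd n j)) (fun k => a (Fin.natAdd (m+1) k))) 0 y)) ∘
            (fun x => g (Function.update (fun j' : Fin (m+1) => a (Fin.castAdd n j')) j x)) := by
        funext x
        have h3 : (fun k => Function.update a (Fin.castAdd n j) x (Fin.natAdd (m+1) k))
            = fun k : Fin n => a (Fin.natAdd (m+1) k) := funext (h1 x)
        simp only [Function.comp_apply, h2, h3, Fin.update_cons_zero]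
      simpa only [heq] using hmem
    | right k =>
      have h1 : ∀ (x : A) j', Function.update a (Fin.natAdd (m+1) k) x (Fin.castAdd n j')
          = a (Fin.castAdd n j') := by
        intro x j'
        apply Function.update_of_ne
        simp only [ne_eq, Fin.ext_iff, Fin.coe_castAdd, Fin.coe_natAdd]
        omega
      have h2 : ∀ x : A, (fun k' => Function.update a (Fin.natAdd (m+1) k) x (Fin.natAdd (m+1) k'))
          = Function.update (fun k' : Fin n => a (Fin.natAdd (m+1) k')) k x := by
        intro x; funext k'
        simp only [Function.update_apply]
        refine if_congr ?_ rfl rfl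
        simp [Fin.ext_iff]
      have hmem := hf k.succ
        (Fin.cons (g (fun j' => a (Fin.castAdd n j'))) (fun k' => a (Fin.natAdd (m+1) k')))
      have heq : (fun x => f (Fin.cons
            (g fun j' => Function.update a (Fin.natAdd (m+1) k) x (Fin.castAdd n j'))
            (fun k' => Function.update a (Fin.natAdd (m+1) k) x (Fin.natAdd (m+1) k'))))
          = (fun x => f (Function.update
              (Fin.cons (g (fun j' => a (Fin.castAdd n j')))
                (fun k' => a (Fin.natAdd (m+1) k'))) k.succ x)) := by
        funext x
        have h3 : (fun j' => Function.update a (Fin.natAdd (m+1) k) x (Fin.castAdd n j'))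
            = fun j' : Fin (m+1) => a (Fin.castAdd n j') := funext (h1 x)
        rw [h2, h3, ← Fin.cons_update]
      simpa only [heq] using hmem
end

section
/- For a monoid M ≤ A^A, the preclone M^* is closed under adding a fictitious first argument (∇f)(x_1,...,x_{n+1}) = f(x_2,...,x_{n+1}) if and only if M contains all constant unary operations. -/
/-- For a transformation monoid M, M* is closed under adding a fictitious first
argument iff M contains all constant unary operations. -/
theorem stmt_11 {A : Type*} [Fintype A] [Nonempty A] (M : Set (A → A))
    (hid : id ∈ M) (hcomp : ∀ g ∈ M, ∀ h ∈ M, g ∘ h ∈ M) :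
    (∀ (n : ℕ) (f : (Fin n → A) → A), MStar M f →
        MStar M (fun v : Fin (n + 1) → A => f (fun i => v i.succ))) ↔
      ∀ a : A, (fun _ => a) ∈ M := by
  constructor
  · intro h a
    have hf : MStar M (fun _ : Fin 0 → A => a) := by
      intro i; exact i.elim0
    have := h 0 (fun _ => a) hf 0 (fun _ => a)
    simpa using this
  · intro hconst n f hf i a
    rcases Fin.eq_zero_or_eq_succ i with rfl | ⟨j, rfl⟩
    · have : (fun x : A => f (fun k => Function.update a 0 x k.succ))
          = fun _ => f (fun k => a k.succ) := by
        funext x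
        exact congrArg f (funext fun k => Function.update_of_ne (Fin.succ_ne_zero k) x a)
      rw [this]
      exact hconst _
    · have : (fun x : A => f (fun k => Function.update a j.succ x k.succ))
          = fun x => f (Function.update (fun k => a k.succ) j x) := by
        funext x
        refine congrArg f (funext fun k => ?_)
        by_cases hk : k = j
        · subst hk; simp
        · rw [Function.update_of_ne hk,
            Function.update_of_ne (fun h => hk (Fin.succ_injective _ h))]
      rw [this]
      exact hf j _
end

section
/- Let A = {a_1,...,a_k} and M ≤ A^A a monoid containing all constant maps. Then M^* is closed under identification of the first two arguments (Δf)(x_1,...,x_{n−1}) = f(x_1,x_1,x_2,...,x_{n−1}) for all f ∈ M^* if and only if Δf ∈ M for every binary f ∈ M^*. -/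
/-- For a monoid M containing all constants: M* is closed under identification
of the first two arguments Δ iff Δf ∈ M for every binary f ∈ M*. -/
theorem stmt_15 {A : Type*} [Fintype A] (M : Set (A → A))
    (hid : id ∈ M) (hcomp : ∀ g ∈ M, ∀ h ∈ M, g ∘ h ∈ M)
    (hconst : ∀ a : A, (fun _ => a) ∈ M) :
    (∀ (n : ℕ) (f : (Fin (n + 2) → A) → A), MStar M f →
        MStar M (fun v : Fin (n + 1) → A => f (Fin.cons (v 0) v))) ↔
      ∀ f : (Fin 2 → A) → A, MStar M f → (fun x => f (fun _ => x)) ∈ M := by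
  constructor
  · intro h f hf
    rcases isEmpty_or_nonempty A with hA | hA
    · have : (fun x => f (fun _ => x)) = id := funext fun x => isEmptyElim x
      rw [this]; exact hid
    · obtain ⟨a0⟩ := hA
      have key : (fun x => f (fun _ => x)) =
          (fun x => (fun v : Fin 1 → A => f (Fin.cons (v 0) v))
            (Function.update (fun _ => a0) 0 x)) := by
        funext x
        have h1 : Function.update (fun _ : Fin 1 => a0) 0 x = fun _ => x :=
          funext fun j => by rw [Subsingleton.elim j 0, Function.update_self]
        simp only [h1]
        congr 1
        funext j
        refine Fin.cases rfl (fun k => rfl) j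
      rw [key]
      exact h 0 f hf 0 (fun _ => a0)
  · intro h n f hf i a
    rcases eq_or_ne i 0 with rfl | hi
    · set g : (Fin 2 → A) → A :=
        fun w => f (Fin.cons (w 0) (Function.update a 0 (w 1))) with hg
      have hgM : MStar M g := by
        intro j b
        fin_cases j
        · have key : (fun x => g (Function.update b 0 x)) =
              (fun x => f (Function.update
                (Fin.cons (b 0) (Function.update a 0 (b 1))) 0 x)) := by
            funext x
            rw [Fin.update_cons_zero, hg]
            simp only [Function.update_self, Function.update_of_ne (by decide : (1:Fin 2) ≠ 0)]
          show (fun x => g (Function.update b 0 x)) ∈ M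
          rw [key]
          exact hf 0 _
        · have key : (fun x => g (Function.update b 1 x)) =
              (fun x => f (Function.update (Fin.cons (b 0) a) ((0 : Fin (n+1)).succ) x)) := by
            funext x
            rw [hg]
            simp only [Function.update_self, Function.update_of_ne (by decide : (0:Fin 2) ≠ 1)]
            rw [← Fin.cons_update]
          show (fun x => g (Function.update b 1 x)) ∈ M
          rw [key]
          exact hf _ _
      have key : (fun x => (fun v : Fin (n+1) → A => f (Fin.cons (v 0) v))
          (Function.update a 0 x)) = (fun x => g (fun _ => x)) := by
        funext x
        simp only [hg, Function.update_self]
      rw [key]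
      exact h g hgM
    · have key : (fun x => (fun v : Fin (n+1) → A => f (Fin.cons (v 0) v))
          (Function.update a i x)) =
          (fun x => f (Function.update (Fin.cons (a 0) a) i.succ x)) := by
        funext x
        show f (Fin.cons (Function.update a i x 0) (Function.update a i x)) = _
        rw [Function.update_of_ne (Ne.symm hi), ← Fin.cons_update]
      rw [key]
      exact hf i.succ _
end

section
/- Let A = {a_1,...,a_k} and M ≤ A^A a monoid containing all constants. Then for every binary f ∈ M^* we have Δf ∈ M if and only if the k-ary relation Γ_M = {(g a_1,...,g a_k) : g ∈ M} is a generalized quasiorder. -/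
/-- Γ_M: the k-ary relation of function tables of the unary maps in M,
with respect to the enumeration e of A. -/
def Gamma {A : Type*} {k : ℕ} (e : Fin k ≃ A) (M : Set (A → A)) :
    Set (Fin k → A) :=
  {t | ∃ g ∈ M, t = fun i => g (e i)}

/-- For a monoid M containing all constants: Δf ∈ M for every binary f ∈ M*
iff Γ_M is a generalized quasiorder. -/
theorem stmt_16 {A : Type*} [Fintype A] {k : ℕ} (e : Fin k ≃ A)
    (M : Set (A → A)) (hid : id ∈ M) (hcomp : ∀ g ∈ M, ∀ h ∈ M, g ∘ h ∈ M)
    (hconst : ∀ a : A, (fun _ => a) ∈ M) :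
    (∀ f : (Fin 2 → A) → A, MStar M f → (fun x => f (fun _ => x)) ∈ M) ↔
      GQuord (Gamma e M) := by
  constructor
  · intro hΔ
    refine ⟨fun a => ⟨fun _ => a, hconst a, rfl⟩, ?_⟩
    intro N hrow hcol
    -- the binary operation corresponding to the matrix N
    set f : (Fin 2 → A) → A := fun v => N (e.symm (v 0)) (e.symm (v 1)) with hfdef
    have hfM : MStar M f := by
      intro i a
      fin_cases i
      · obtain ⟨g, hg, hgeq⟩ := hcol (e.symm (a 1))
        have : (fun x => f (Function.update a 0 x)) = g := by
          funext x
          have h0 : Function.update a 0 x 0 = x := by simp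
          have h1 : Function.update a 0 x 1 = a 1 := by
            simp [Function.update]
          have := congrFun hgeq (e.symm x)
          simp only [hfdef, h0, h1]
          rw [this, Equiv.apply_symm_apply]
        show (fun x => f (Function.update a 0 x)) ∈ M
        rw [this]; exact hg
      · obtain ⟨g, hg, hgeq⟩ := hrow (e.symm (a 0))
        have : (fun x => f (Function.update a 1 x)) = g := by
          funext x
          have h0 : Function.update a 1 x 0 = a 0 := by
            simp [Function.update]
          have h1 : Function.update a 1 x 1 = x := by simp
          have := congrFun hgeq (e.symm x)
          simp only [hfdef, h0, h1]
          rw [this, Equiv.apply_symm_apply]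
        show (fun x => f (Function.update a 1 x)) ∈ M
        rw [this]; exact hg
    refine ⟨fun x => f (fun _ => x), hΔ f hfM, ?_⟩
    funext i
    simp [hfdef]
  · intro hQ f hf
    obtain ⟨_, htrans⟩ := hQ
    set N : Fin k → Fin k → A := fun i j => f (fun m => if m = 0 then e i else e j)
      with hNdef
    have hrow : ∀ i, (fun j => N i j) ∈ Gamma e M := by
      intro i
      refine ⟨fun x => f (Function.update (fun _ => e i) 1 x), hf 1 _, ?_⟩
      funext j
      simp only [hNdef]
      congr 1
      funext m
      fin_cases m <;> simp [Function.update]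
    have hcol : ∀ j, (fun i => N i j) ∈ Gamma e M := by
      intro j
      refine ⟨fun x => f (Function.update (fun _ => e j) 0 x), hf 0 _, ?_⟩
      funext i
      simp only [hNdef]
      congr 1
      funext m
      fin_cases m <;> simp [Function.update]
    obtain ⟨g, hg, hgeq⟩ := htrans N hrow hcol
    have : (fun x => f (fun _ => x)) = g := by
      funext x
      have := congrFun hgeq (e.symm x)
      simp only [hNdef, Equiv.apply_symm_apply] at this
      rw [show (fun m : Fin 2 => if m = 0 then x else x) = (fun _ => x) by
        funext m; split <;> rfl] at this
      exact this
    rw [this]; exact hg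
end

section
/- Let A be a set, B a nonempty proper subset, m ≥ 1, and σ ⊆ B^m a generalized quasiorder on B. Then ρ := σ ∪ {(a,...,a) : a ∈ A \ B} is a generalized quasiorder on A with ρ restricted to B equal to σ. Conversely, the restriction to B of any generalized quasiorder on A is a generalized quasiorder on B. Hence gQuord(B) = gQuord(A)↾_B. -/
/-- The restriction of an m-ary relation on A to a subset B. -/
def restrictRel {A : Type*} (B : Set A) {m : ℕ} (τ : Set (Fin m → A)) :
    Set (Fin m → B) :=
  {s | (fun i => (s i : A)) ∈ τ}

theorem ext_aux {A : Type*} {m : ℕ} (hm : 1 ≤ m) (B : Set A)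
    (σ : Set (Fin m → B)) (hσ : GQuord σ) :
    GQuord {t : Fin m → A |
        (∃ s ∈ σ, t = fun i => (s i : A)) ∨ ∃ a ∉ B, t = fun _ => a} ∧
      restrictRel B {t : Fin m → A |
        (∃ s ∈ σ, t = fun i => (s i : A)) ∨ ∃ a ∉ B, t = fun _ => a} = σ := by
  set ρ : Set (Fin m → A) := {t : Fin m → A |
      (∃ s ∈ σ, t = fun i => (s i : A)) ∨ ∃ a ∉ B, t = fun _ => a} with hρ
  have i0 : Fin m := ⟨0, hm⟩
  constructor
  · constructor
    · intro a
      by_cases ha : a ∈ B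
      · exact Or.inl ⟨fun _ => ⟨a, ha⟩, hσ.1 ⟨a, ha⟩, rfl⟩
      · exact Or.inr ⟨a, ha, rfl⟩
    · intro M hrow hcol
      by_cases hall : ∀ i j, M i j ∈ B
      · -- all entries in B; all rows/cols must be σ-type
        set N : Fin m → Fin m → B := fun i j => ⟨M i j, hall i j⟩ with hN
        have hNrow : ∀ i, (fun j => N i j) ∈ σ := by
          intro i
          rcases hrow i with ⟨s, hs, heq⟩ | ⟨a, haB, heq⟩
          · have : (fun j => N i j) = s := by
              funext j
              exact Subtype.ext (by simpa using congrFun heq j)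
            rwa [this]
          · exact absurd (by rw [← congrFun heq i0]; exact hall i i0) haB
        have hNcol : ∀ j, (fun i => N i j) ∈ σ := by
          intro j
          rcases hcol j with ⟨s, hs, heq⟩ | ⟨a, haB, heq⟩
          · have : (fun i => N i j) = s := by
              funext i
              exact Subtype.ext (by simpa using congrFun heq i)
            rwa [this]
          · exact absurd (by rw [← congrFun heq i0]; exact hall i0 j) haB
        exact Or.inl ⟨fun i => N i i, hσ.2 N hNrow hNcol, rfl⟩
      · -- some entry outside B
        push_neg at hall
        obtain ⟨i, j, hij⟩ := hall
        -- column j is constant a ∉ B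
        have hcolj : ∃ a ∉ B, ∀ i', M i' j = a := by
          rcases hcol j with ⟨s, hs, heq⟩ | ⟨a, haB, heq⟩
          · exact absurd (by rw [congrFun heq i]; exact (s i).2) hij
          · exact ⟨a, haB, fun i' => congrFun heq i'⟩
        obtain ⟨a, haB, hconst⟩ := hcolj
        -- every column is constant a
        have hallcols : ∀ j' i', M i' j' = a := by
          intro j' i'
          -- row i' constant? row i' contains M i' j = a ∉ B
          have hrowi' : ∃ b ∉ B, ∀ j'', M i' j'' = b := by
            rcases hrow i' with ⟨s, hs, heq⟩ | ⟨b, hbB, heq⟩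
            · exact absurd (hconst i' ▸ (by rw [congrFun heq j]; exact (s j).2)) haB
            · exact ⟨b, hbB, fun j'' => congrFun heq j''⟩
          obtain ⟨b, hbB, hconstb⟩ := hrowi'
          have : b = a := by rw [← hconstb j, hconst i']
          rw [hconstb j', this]
        exact Or.inr ⟨a, haB, funext fun i' => hallcols i' i'⟩
  · ext s
    constructor
    · intro hs
      rcases hs with ⟨s', hs', heq⟩ | ⟨a, haB, heq⟩
      · have : s = s' := by
          funext i
          exact Subtype.ext (by simpa using congrFun heq i)
        rwa [this]
      · exact absurd (congrFun heq i0 ▸ (s i0).2) haB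
    · intro hs
      exact Or.inl ⟨s, hs, rfl⟩

/-- Extension/restriction of generalized quasiorders between a set A and a
nonempty proper subset B: σ ∪ {(a,...,a) : a ∉ B} is a generalized quasiorder
on A restricting to σ; restrictions of generalized quasiorders on A are
generalized quasiorders on B; hence gQuord(B) = gQuord(A)↾_B. -/
theorem stmt_19 {A : Type*} {m : ℕ} (hm : 1 ≤ m) (B : Set A)
    (hB : B.Nonempty) (hBp : B ≠ Set.univ)
    (σ : Set (Fin m → B)) (hσ : GQuord σ) :
    (GQuord {t : Fin m → A |
        (∃ s ∈ σ, t = fun i => (s i : A)) ∨ ∃ a ∉ B, t = fun _ => a} ∧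
      restrictRel B {t : Fin m → A |
        (∃ s ∈ σ, t = fun i => (s i : A)) ∨ ∃ a ∉ B, t = fun _ => a} = σ) ∧
    (∀ τ : Set (Fin m → A), GQuord τ → GQuord (restrictRel B τ)) ∧
    {σ' : Set (Fin m → B) | GQuord σ'} =
      restrictRel B '' {τ : Set (Fin m → A) | GQuord τ} := by
  have hrestr : ∀ τ : Set (Fin m → A), GQuord τ → GQuord (restrictRel B τ) := by
    intro τ hτ
    constructor
    · intro b
      exact hτ.1 (b : A)
    · intro N hrow hcol
      exact hτ.2 (fun i j => (N i j : A)) (fun i => hrow i) (fun j => hcol j)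
  refine ⟨ext_aux hm B σ hσ, hrestr, ?_⟩
  ext σ'
  constructor
  · intro hσ'
    exact ⟨_, (ext_aux hm B σ' hσ').1, (ext_aux hm B σ' hσ').2⟩
  · rintro ⟨τ, hτ, rfl⟩
    exact hrestr τ hτ
end
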